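/- Let G be a connected graph in W_p with n = n(G), α = α(G), which is λ-quasi-regularizable. If (k+1)p(α−k+1) − k(n − (λ+1)k) ≥ 0 for every 1 ≤ k ≤ α−1, then the independence polynomial I(G;x) = Σ s_k x^k is log-concave, i.e. s_k^2 ≥ s_{k-1}s_{k+1} for 1 ≤ k ≤ α−1. -/

import Mathlib

open Finset
open scoped Classical

variable {V : Type*}

/-- `A` is an independent set of `G`. -/
def IsIndep (G : SimpleGraph V) (A : Finset V) : Prop :=
  ∀ u ∈ A, ∀ v ∈ A, ¬ G.Adj u v

/-- Open neighborhood of a set of vertices. -/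
noncomputable def nbhd [Fintype V] (G : SimpleGraph V) (A : Finset V) : Finset V :=
  Finset.univ.filter fun v => v ∉ A ∧ ∃ u ∈ A, G.Adj u v

/-- Independence number. -/
noncomputable def alphaNum [Fintype V] (G : SimpleGraph V) : ℕ :=
  (Finset.univ.filter fun A : Finset V => IsIndep G A).sup Finset.card

/-- Maximum independent set. -/
def IsMaxIndep [Fintype V] (G : SimpleGraph V) (S : Finset V) : Prop :=
  IsIndep G S ∧ S.card = alphaNum G

/-- The class W₂. -/
def InW2 [Fintype V] (G : SimpleGraph V) : Prop :=
  2 ≤ Fintype.card V ∧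
    ∀ A B : Finset V, IsIndep G A → IsIndep G B → Disjoint A B →
      ∃ S T : Finset V, IsMaxIndep G S ∧ IsMaxIndep G T ∧ Disjoint S T ∧ A ⊆ S ∧ B ⊆ T

/-- The class W_p. -/
def InWp [Fintype V] (G : SimpleGraph V) (p : ℕ) : Prop :=
  p ≤ Fintype.card V ∧
    ∀ A : Fin p → Finset V, (∀ i, IsIndep G (A i)) →
      (∀ i j, i ≠ j → Disjoint (A i) (A j)) →
      ∃ S : Fin p → Finset V, (∀ i, IsMaxIndep G (S i)) ∧
        (∀ i j, i ≠ j → Disjoint (S i) (S j)) ∧ ∀ i, A i ⊆ S i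

/-- `l`-quasi-regularizability. -/
def QuasiReg [Fintype V] (G : SimpleGraph V) (l : ℕ) : Prop :=
  ∀ A : Finset V, IsIndep G A → l * A.card ≤ (nbhd G A).card

/-- `s_k`: the number of independent sets of cardinality `k`. -/
noncomputable def indepCount [Fintype V] (G : SimpleGraph V) (k : ℕ) : ℕ :=
  (Finset.univ.filter fun A : Finset V => IsIndep G A ∧ A.card = k).card

/-- Closed neighborhood. -/
noncomputable def closedNbhd [Fintype V] (G : SimpleGraph V) (A : Finset V) : Finset V :=
  A ∪ nbhd G A


/-- extension vertices of an independent set -/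
noncomputable def extS [Fintype V] (G : SimpleGraph V) (A : Finset V) : Finset V :=
  Finset.univ.filter fun v => v ∉ A ∧ ∀ u ∈ A, ¬ G.Adj u v

lemma mem_extS [Fintype V] {G : SimpleGraph V} {A : Finset V} {v : V} :
    v ∈ extS G A ↔ v ∉ A ∧ ∀ u ∈ A, ¬ G.Adj u v := by
  simp [extS]

lemma indep_subset {G : SimpleGraph V} {A B : Finset V} (hB : IsIndep G B) (h : A ⊆ B) :
    IsIndep G A := fun u hu v hv => hB u (h hu) v (h hv)

lemma indep_insert [Fintype V] {G : SimpleGraph V} {A : Finset V} {v : V}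
    (hA : IsIndep G A) (hv : v ∈ extS G A) : IsIndep G (insert v A) := by
  rw [mem_extS] at hv
  intro x hx y hy
  rcases Finset.mem_insert.1 hx with h1 | h1 <;> rcases Finset.mem_insert.1 hy with h2 | h2
  · subst h1; subst h2; exact G.loopless.irrefl _
  · subst h1; exact fun h => hv.2 y h2 h.symm
  · subst h2; exact hv.2 x h1
  · exact hA x h1 y h2

lemma card_le_alpha [Fintype V] {G : SimpleGraph V} {A : Finset V} (hA : IsIndep G A) :
    A.card ≤ alphaNum G :=
  Finset.le_sup (Finset.mem_filter.2 ⟨Finset.mem_univ _, hA⟩)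

/-- double counting: pairs (A, v) with |A| = k, v extending A -/
lemma pair_count [Fintype V] (G : SimpleGraph V) (k : ℕ) :
    (k + 1) * indepCount G (k + 1) =
      ∑ A ∈ Finset.univ.filter (fun A : Finset V => IsIndep G A ∧ A.card = k),
        (extS G A).card := by
  classical
  set Sk := Finset.univ.filter (fun A : Finset V => IsIndep G A ∧ A.card = k) with hSk
  set T := Finset.univ.filter (fun B : Finset V => IsIndep G B ∧ B.card = k + 1) with hT
  have h1 : ∑ A ∈ Sk, (extS G A).card = (Sk.sigma fun A => extS G A).card :=
    (Finset.card_sigma _ _).symm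
  have h2 : (k + 1) * indepCount G (k + 1) = (T.sigma fun B => (B : Finset V)).card := by
    rw [Finset.card_sigma]
    have : ∀ B ∈ T, (B : Finset V).card = k + 1 := by
      intro B hB
      exact ((Finset.mem_filter.1 hB).2).2
    rw [Finset.sum_congr rfl this, Finset.sum_const, smul_eq_mul, indepCount, mul_comm]
  rw [h1, h2]
  apply Finset.card_bij' (i := fun x _ => (⟨x.1.erase x.2, x.2⟩ : Σ _ : Finset V, V))
    (j := fun x _ => (⟨insert x.2 x.1, x.2⟩ : Σ _ : Finset V, V))
  · rintro ⟨B, v⟩ hx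
    rw [Finset.mem_sigma] at hx ⊢
    obtain ⟨hB, hv⟩ := hx
    obtain ⟨-, hBi, hBc⟩ := Finset.mem_filter.1 hB
    refine ⟨Finset.mem_filter.2 ⟨Finset.mem_univ _, indep_subset hBi (Finset.erase_subset _ _), ?_⟩, ?_⟩
    · rw [Finset.card_erase_of_mem hv, hBc]; omega
    · rw [mem_extS]
      exact ⟨Finset.notMem_erase _ _,
        fun u hu => hBi u (Finset.mem_of_mem_erase hu) v hv⟩
  · rintro ⟨A, v⟩ hx
    rw [Finset.mem_sigma] at hx ⊢
    obtain ⟨hA, hv⟩ := hx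
    obtain ⟨-, hAi, hAc⟩ := Finset.mem_filter.1 hA
    have hvA : v ∉ A := (mem_extS.1 hv).1
    refine ⟨Finset.mem_filter.2 ⟨Finset.mem_univ _, indep_insert hAi hv, ?_⟩, Finset.mem_insert_self _ _⟩
    rw [Finset.card_insert_of_notMem hvA, hAc]
  · rintro ⟨B, v⟩ hx
    rw [Finset.mem_sigma] at hx
    simp only [Finset.insert_erase hx.2]
  · rintro ⟨A, v⟩ hx
    rw [Finset.mem_sigma] at hx
    simp only [Finset.erase_insert (mem_extS.1 hx.2).1]

/-- Key W_p lemma: every independent set has at least p(α - |A|) extension vertices. -/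
lemma ext_lower [Fintype V] {G : SimpleGraph V} {p : ℕ} (hWp : InWp G p)
    {A : Finset V} (hA : IsIndep G A) :
    p * (alphaNum G - A.card) ≤ (extS G A).card := by
  classical
  set α := alphaNum G with hα
  set k := A.card with hk
  set H := extS G A with hH
  -- A is disjoint from H
  have hAH : ∀ v ∈ H, v ∉ A := fun v hv => (mem_extS.1 hv).1
  -- families of p pairwise disjoint independent subsets of H
  set F : Finset (Fin p → Finset V) := Finset.univ.filter
    (fun C => (∀ i, C i ⊆ H ∧ IsIndep G (C i)) ∧
      ∀ i j, i ≠ j → Disjoint (C i) (C j)) with hF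
  have hFne : F.Nonempty := by
    refine ⟨fun _ => ∅, Finset.mem_filter.2 ⟨Finset.mem_univ _, ?_, ?_⟩⟩
    · exact fun i => ⟨Finset.empty_subset _, fun u hu => absurd hu (Finset.notMem_empty _)⟩
    · intro i j _; exact disjoint_empty_left _
  obtain ⟨C, hCF, hCmax⟩ := F.exists_max_image (fun C => ∑ i, (C i).card) hFne
  obtain ⟨-, hC1, hC2⟩ := Finset.mem_filter.1 hCF
  -- each member of the maximal family has size ≥ α - k
  have hbig : ∀ j, α - k ≤ (C j).card := by
    intro j
    by_contra hlt
    push_neg at hlt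
    -- build the modified family D
    set D : Fin p → Finset V := Function.update C j (A ∪ C j) with hD
    have hDind : ∀ i, IsIndep G (D i) := by
      intro i
      by_cases hij : i = j
      · subst hij
        rw [hD, Function.update_self]
        intro x hx y hy
        rcases Finset.mem_union.1 hx with h1 | h1 <;> rcases Finset.mem_union.1 hy with h2 | h2
        · exact hA x h1 y h2
        · exact (mem_extS.1 ((hC1 i).1 h2)).2 x h1
        · exact fun h => (mem_extS.1 ((hC1 i).1 h1)).2 y h2 h.symm
        · exact (hC1 i).2 x h1 y h2
      · rw [hD, Function.update_of_ne hij]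
        exact (hC1 i).2
    have hDdisj : ∀ i i', i ≠ i' → Disjoint (D i) (D i') := by
      have hAC : ∀ i, Disjoint A (C i) :=
        fun i => Finset.disjoint_left.2 fun a ha hc => hAH a ((hC1 i).1 hc) ha
      intro i i' hne
      by_cases hij : i = j <;> by_cases hij' : i' = j
      · exact absurd (hij.trans hij'.symm) hne
      · subst hij
        rw [hD, Function.update_self, Function.update_of_ne hij']
        exact Finset.disjoint_union_left.2 ⟨hAC i', hC2 i i' hne⟩
      · subst hij'
        rw [hD, Function.update_self, Function.update_of_ne hij]
        exact Finset.disjoint_union_right.2 ⟨(hAC i).symm, hC2 i i' hne⟩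
      · rw [hD, Function.update_of_ne hij, Function.update_of_ne hij']
        exact hC2 i i' hne
    obtain ⟨S, hSmax, hSdisj, hSsub⟩ := hWp.2 D hDind hDdisj
    -- the improved family
    set C' : Fin p → Finset V := fun i => S i ∩ H with hC'
    have hC'F : C' ∈ F := by
      refine Finset.mem_filter.2 ⟨Finset.mem_univ _, fun i => ⟨Finset.inter_subset_right, ?_⟩, ?_⟩
      · exact indep_subset (hSmax i).1 Finset.inter_subset_left
      · intro i i' hne
        exact Finset.disjoint_left.2 fun a ha ha' =>
          Finset.disjoint_left.1 (hSdisj i i' hne) (Finset.mem_inter.1 ha).1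
            (Finset.mem_inter.1 ha').1
    have hmono : ∀ i, C i ⊆ C' i := by
      intro i
      intro a ha
      refine Finset.mem_inter.2 ⟨?_, (hC1 i).1 ha⟩
      apply hSsub i
      by_cases hij : i = j
      · subst hij; rw [hD, Function.update_self]; exact Finset.mem_union_right _ ha
      · rw [hD, Function.update_of_ne hij]; exact ha
    have hASj : A ⊆ S j := by
      have := hSsub j
      rw [hD, Function.update_self] at this
      exact fun a ha => this (Finset.mem_union_left _ ha)
    have hCj' : (C' j).card = α - k := by
      have heq : C' j = S j \ A := by
        ext v
        constructor
        · intro hv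
          obtain ⟨hv1, hv2⟩ := Finset.mem_inter.1 hv
          exact Finset.mem_sdiff.2 ⟨hv1, hAH v hv2⟩
        · intro hv
          obtain ⟨hv1, hv2⟩ := Finset.mem_sdiff.1 hv
          refine Finset.mem_inter.2 ⟨hv1, mem_extS.2 ⟨hv2, fun u hu => ?_⟩⟩
          exact (hSmax j).1 u (hASj hu) v hv1
      rw [heq, Finset.card_sdiff_of_subset hASj, (hSmax j).2]
    have hstrict : ∑ i, (C i).card < ∑ i, (C' i).card := by
      apply Finset.sum_lt_sum (fun i _ => Finset.card_le_card (hmono i))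
      exact ⟨j, Finset.mem_univ _, by rw [hCj']; exact hlt⟩
    exact absurd (hCmax C' hC'F) (not_le.2 hstrict)
  -- conclude: disjoint union inside H
  calc p * (α - k) = ∑ _i : Fin p, (α - k) := by
        rw [Finset.sum_const, Finset.card_univ, Fintype.card_fin, smul_eq_mul]
    _ ≤ ∑ i, (C i).card := Finset.sum_le_sum fun i _ => hbig i
    _ = (Finset.univ.biUnion C).card :=
        (Finset.card_biUnion fun i _ j _ hne => hC2 i j hne).symm
    _ ≤ H.card := Finset.card_le_card (Finset.biUnion_subset.2 fun i _ => (hC1 i).1)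

/-- per-set upper bound from quasi-regularizability -/
lemma ext_upper [Fintype V] {G : SimpleGraph V} {lam : ℕ} (hqr : QuasiReg G lam)
    {A : Finset V} (hA : IsIndep G A) :
    (extS G A).card + (lam + 1) * A.card ≤ Fintype.card V := by
  classical
  have hd1 : Disjoint (extS G A) A :=
    Finset.disjoint_left.2 fun v hv => fun hvA => (mem_extS.1 hv).1 hvA
  have hd2 : Disjoint (extS G A ∪ A) (nbhd G A) := by
    apply Finset.disjoint_left.2
    intro v hv hvn
    obtain ⟨hvA, u, hu, hadj⟩ := (Finset.mem_filter.1 hvn).2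
    rcases Finset.mem_union.1 hv with h | h
    · exact (mem_extS.1 h).2 u hu hadj
    · exact hvA h
  have hsub : (extS G A ∪ A) ∪ nbhd G A ⊆ Finset.univ := Finset.subset_univ _
  have hcard := Finset.card_le_card hsub
  rw [Finset.card_union_of_disjoint hd2, Finset.card_union_of_disjoint hd1,
    Finset.card_univ] at hcard
  have hnb := hqr A hA
  nlinarith [hcard, hnb]

/-- summed inequality (i) -/
lemma ineq1 [Fintype V] {G : SimpleGraph V} {lam : ℕ} (hqr : QuasiReg G lam) (k : ℕ) :
    (((k + 1) * indepCount G (k + 1) : ℕ) : ℤ) ≤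
      ((Fintype.card V : ℤ) - (lam + 1) * k) * indepCount G k := by
  classical
  rw [pair_count G k]
  push_cast
  calc (∑ A ∈ Finset.univ.filter (fun A : Finset V => IsIndep G A ∧ A.card = k),
          ((extS G A).card : ℤ))
      ≤ ∑ _A ∈ Finset.univ.filter (fun A : Finset V => IsIndep G A ∧ A.card = k),
          ((Fintype.card V : ℤ) - (lam + 1) * k) := by
        apply Finset.sum_le_sum
        intro A hA
        obtain ⟨-, hAi, hAc⟩ := Finset.mem_filter.1 hA
        have := ext_upper hqr hAi
        rw [hAc] at this
        have : ((extS G A).card + (lam + 1) * k : ℤ) ≤ (Fintype.card V : ℤ) := by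
          exact_mod_cast this
        linarith
    _ = ((Fintype.card V : ℤ) - (lam + 1) * k) * indepCount G k := by
        rw [Finset.sum_const, indepCount, nsmul_eq_mul, mul_comm]

/-- summed inequality (ii) -/
lemma ineq2 [Fintype V] {G : SimpleGraph V} {p : ℕ} (hWp : InWp G p) (k : ℕ) :
    p * (alphaNum G - k) * indepCount G k ≤ (k + 1) * indepCount G (k + 1) := by
  classical
  rw [pair_count G k]
  calc p * (alphaNum G - k) * indepCount G k
      = ∑ _A ∈ Finset.univ.filter (fun A : Finset V => IsIndep G A ∧ A.card = k),
          p * (alphaNum G - k) := by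
        rw [Finset.sum_const, indepCount, smul_eq_mul, mul_comm]
    _ ≤ ∑ A ∈ Finset.univ.filter (fun A : Finset V => IsIndep G A ∧ A.card = k),
          (extS G A).card := by
        apply Finset.sum_le_sum
        intro A hA
        obtain ⟨-, hAi, hAc⟩ := Finset.mem_filter.1 hA
        have := ext_lower hWp hAi
        rw [hAc] at this
        exact this

/-- general log-concavity criterion. -/
theorem general_log_concavity_criterion [Fintype V] (G : SimpleGraph V)
    (p lam : ℕ) (hp : 1 ≤ p) (hlam : 0 < lam)
    (hconn : G.Connected) (hWp : InWp G p) (hqr : QuasiReg G lam)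
    (hPhi : ∀ k : ℕ, 1 ≤ k → k + 1 ≤ alphaNum G →
      0 ≤ ((k : ℤ) + 1) * p * ((alphaNum G : ℤ) - k + 1)
            - k * ((Fintype.card V : ℤ) - (lam + 1) * k)) :
    ∀ k : ℕ, 1 ≤ k → k + 1 ≤ alphaNum G →
      indepCount G (k - 1) * indepCount G (k + 1) ≤ (indepCount G k) ^ 2 := by

  intro k hk1 hk2
  have hphi := hPhi k hk1 hk2
  have h2n := ineq2 hWp (k - 1)
  have hk1' : k - 1 + 1 = k := by omega
  rw [hk1'] at h2n
  have h1z := ineq1 hqr k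
  -- cast h2n to ℤ
  have hle : k - 1 ≤ alphaNum G := by omega
  have h2z := (Nat.cast_le (α := ℤ)).2 h2n
  push_cast [Nat.cast_sub hle, Nat.cast_sub hk1] at h2z
  push_cast at h1z
  set a := indepCount G (k - 1)
  set b := indepCount G k
  set c := indepCount G (k + 1)
  have ha : (0 : ℤ) ≤ a := Int.natCast_nonneg _
  have hb : (0 : ℤ) ≤ b := Int.natCast_nonneg _
  have hc : (0 : ℤ) ≤ c := Int.natCast_nonneg _
  have hk0 : (0 : ℤ) ≤ (k : ℤ) := Int.natCast_nonneg _
  have hαk : (2 : ℤ) ≤ (alphaNum G : ℤ) - k + 1 := by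
    have : (k : ℤ) + 1 ≤ (alphaNum G : ℤ) := by exact_mod_cast hk2
    linarith
  have hp' : (1 : ℤ) ≤ (p : ℤ) := by exact_mod_cast hp
  -- h2z : p * (α - (k-1)) * a ≤ k * b  (with α - (k-1) = α - k + 1)
  -- h1z : (k+1) * c ≤ (n - (lam+1)k) * b
  zify
  set K := (k : ℤ)
  set N := (Fintype.card V : ℤ)
  set AL := (alphaNum G : ℤ)
  set P := (p : ℤ)
  set L := (lam : ℤ)
  have key1 : P * (AL - K + 1) * a * ((K + 1) * c) ≤ K * b * ((K + 1) * c) := by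
    have h2z' : P * (AL - (K - 1)) * a ≤ K * b := by convert h2z using 2 <;> ring
    apply mul_le_mul_of_nonneg_right _ (by positivity)
    calc P * (AL - K + 1) * a = P * (AL - (K - 1)) * a := by ring
      _ ≤ K * b := h2z'
  have key2 : K * b * ((K + 1) * c) ≤ K * b * ((N - (L + 1) * K) * b) := by
    apply mul_le_mul_of_nonneg_left h1z (by positivity)
  have key3 : K * (N - (L + 1) * K) * (b * b) ≤ (K + 1) * P * (AL - K + 1) * (b * b) := by
    apply mul_le_mul_of_nonneg_right _ (by positivity)
    linarith
  have hC : (0 : ℤ) < (K + 1) * P * (AL - K + 1) := by positivity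
  have final : (K + 1) * P * (AL - K + 1) * (a * c) ≤ (K + 1) * P * (AL - K + 1) * (b * b) := by
    calc (K + 1) * P * (AL - K + 1) * (a * c)
        = P * (AL - K + 1) * a * ((K + 1) * c) := by ring
      _ ≤ K * b * ((K + 1) * c) := key1
      _ ≤ K * b * ((N - (L + 1) * K) * b) := key2
      _ = K * (N - (L + 1) * K) * (b * b) := by ring
      _ ≤ (K + 1) * P * (AL - K + 1) * (b * b) := key3
  have := le_of_mul_le_mul_left (by linarith [final] : (K + 1) * P * (AL - K + 1) * (a * c) ≤ (K + 1) * P * (AL - K + 1) * (b * b)) hC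
  calc (a : ℤ) * c ≤ b * b := this
    _ = b ^ 2 := by ring
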